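/- Let n ≥ 1 and let Φ_A = {±e_i : 1 ≤ i ≤ n} ∪ {±(e_j − e_k) : 1 ≤ j ≠ k ≤ n} be the set of roots of type A_n in ℝ^n, with dual lattice M = ℤ^n. Let r ≥ 1 and let P_1, …, P_r ⊆ ℝ^n be lattice polytopes with respect to M (each the convex hull of a nonempty finite subset of M) such that the Minkowski sum P_1 + ⋯ + P_r is cut out by Φ_A, i.e., there exist a finite subset S ⊆ Φ_A and real numbers c_v with P_1 + ⋯ + P_r = {x ∈ ℝ^n : ⟨x, v⟩ ≥ c_v for all v ∈ S}. Then the Cayley sum P_1 * ⋯ * P_r, the convex hull of (P_1 × {e_1}) ∪ ⋯ ∪ (P_r × {e_r}) in ℝ^n × ℝ^r, is a normal lattice polytope with respect to the lattice M × ℤ^r: for every positive integer m, every point of M × ℤ^r lying in m·(P_1 * ⋯ * P_r) is a sum of m points of (M × ℤ^r) ∩ (P_1 * ⋯ * P_r). -/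

import Mathlib

open Finset Pointwise

noncomputable def stdBasis (n : ℕ) (i : Fin n) : Fin n → ℝ := fun j => if j = i then 1 else 0

noncomputable def innerProd {n : ℕ} (u v : Fin n → ℝ) : ℝ := ∑ i, u i * v i

def typeA (n : ℕ) : Set (Fin n → ℝ) :=
  {v | ∃ i, v = stdBasis n i ∨ v = -stdBasis n i} ∪
  {v | ∃ j k, j ≠ k ∧ v = stdBasis n j - stdBasis n k}

def intLattice (n : ℕ) : Set (Fin n → ℝ) := {u | ∀ i, ∃ m : ℤ, u i = m}

/-!
Let `h i v` be the minimum of `⟨·, v⟩` on `Pᵢ`. Since `P₁ + ⋯ + Pᵣ` is cut out by `S`, a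
separation argument shows that every `∑ zᵢ Pᵢ` with `zᵢ ≥ 0` is cut out by `S` as well, with
right-hand sides `∑ zᵢ h i v`. A lattice point of `m • (P₁ * ⋯ * Pᵣ)` is `(y, z)` with `z ∈ ℕʳ`,
`∑ zᵢ = m` and `y ∈ ∑ zᵢ Pᵢ`. Pick `i₀` with `z i₀ > 0` and write `y = g + y'` with `g ∈ Pᵢ₀`
and `y'` in the sum with `z i₀` lowered by one. Then
`h i₀ v ≤ ⟨g, v⟩ ≤ ⟨y, v⟩ - ∑ zᵢ h i v + h i₀ v` with integral bounds, and rounding `g` down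
coordinatewise keeps `⟨g, v⟩` between them, since a root of type `A` has at most one coordinate
`1` and at most one coordinate `-1`. Hence `⌊g⌋` is a lattice point of `Pᵢ₀`, `y - ⌊g⌋` is one of
the smaller sum, and induction on `m` finishes.
-/

lemma innerProd_eq_dotProduct {n : ℕ} (u v : Fin n → ℝ) : innerProd u v = u ⬝ᵥ v := rfl

lemma innerProd_add {n : ℕ} (x y v : Fin n → ℝ) :
    innerProd (x + y) v = innerProd x v + innerProd y v :=
  add_dotProduct x y v

lemma innerProd_sub {n : ℕ} (x y v : Fin n → ℝ) :
    innerProd (x - y) v = innerProd x v - innerProd y v :=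
  sub_dotProduct x y v

lemma innerProd_smul {n : ℕ} (t : ℝ) (x v : Fin n → ℝ) : innerProd (t • x) v = t * innerProd x v :=
  smul_dotProduct t x v

lemma innerProd_sum {n : ℕ} {ι : Type*} (s : Finset ι) (g : ι → Fin n → ℝ) (v : Fin n → ℝ) :
    innerProd (∑ i ∈ s, g i) v = ∑ i ∈ s, innerProd (g i) v :=
  sum_dotProduct s g v

lemma isLinearMap_innerProd {n : ℕ} (v : Fin n → ℝ) : IsLinearMap ℝ (innerProd · v) :=
  ⟨fun x y => innerProd_add x y v, fun t x => innerProd_smul t x v⟩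

lemma stdBasis_eq_single (n : ℕ) (i : Fin n) : stdBasis n i = Pi.single i 1 := by
  ext j
  simp [stdBasis, Pi.single_apply]

section Lattice

variable {n : ℕ}

lemma innerProd_mem_intLattice {x v : Fin n → ℝ} (hx : x ∈ intLattice n) (hv : v ∈ intLattice n) :
    ∃ a : ℤ, innerProd x v = a := by
  choose a ha using hx
  choose b hb using hv
  exact ⟨∑ i, a i * b i, by simp [innerProd, ha, hb]⟩

lemma stdBasis_mem_intLattice (i : Fin n) : stdBasis n i ∈ intLattice n := fun j =>
  ⟨if j = i then 1 else 0, by simp only [stdBasis]; split_ifs <;> simp⟩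

lemma sub_mem_intLattice {u w : Fin n → ℝ} (hu : u ∈ intLattice n) (hw : w ∈ intLattice n) :
    u - w ∈ intLattice n := fun j => by
  obtain ⟨a, ha⟩ := hu j
  obtain ⟨b, hb⟩ := hw j
  exact ⟨a - b, by simp [ha, hb]⟩

lemma typeA_subset_intLattice : typeA n ⊆ intLattice n := by
  have hzero : (0 : Fin n → ℝ) ∈ intLattice n := fun _ => ⟨0, by simp⟩
  rintro v (⟨i, rfl | rfl⟩ | ⟨j, k, -, rfl⟩)
  · exact stdBasis_mem_intLattice i
  · simpa using sub_mem_intLattice hzero (stdBasis_mem_intLattice i)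
  · exact sub_mem_intLattice (stdBasis_mem_intLattice j) (stdBasis_mem_intLattice k)

lemma neg_mem_typeA {v : Fin n → ℝ} (hv : v ∈ typeA n) : -v ∈ typeA n := by
  rcases hv with ⟨i, rfl | rfl⟩ | ⟨j, k, hjk, rfl⟩
  · exact Or.inl ⟨i, Or.inr rfl⟩
  · exact Or.inl ⟨i, Or.inl (neg_neg _)⟩
  · exact Or.inr ⟨k, j, hjk.symm, neg_sub _ _⟩

lemma le_innerProd_floor {v : Fin n → ℝ} (hv : v ∈ typeA n) {x : Fin n → ℝ} {a : ℤ}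
    (h : (a : ℝ) ≤ innerProd x v) : (a : ℝ) ≤ innerProd (fun j => (⌊x j⌋ : ℝ)) v := by
  rcases hv with ⟨i, rfl | rfl⟩ | ⟨j, k, -, rfl⟩
  · simp only [stdBasis_eq_single, innerProd_eq_dotProduct, dotProduct_single_one] at h ⊢
    exact_mod_cast Int.le_floor.2 h
  · simp only [stdBasis_eq_single, innerProd_eq_dotProduct, dotProduct_neg,
      dotProduct_single_one] at h ⊢
    linarith [Int.floor_le (x i)]
  · simp only [stdBasis_eq_single, innerProd_eq_dotProduct, dotProduct_sub,
      dotProduct_single_one] at h ⊢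
    have : ⌊x k⌋ + a ≤ ⌊x j⌋ := Int.le_floor.2 (by push_cast; linarith [Int.floor_le (x k)])
    have : (⌊x k⌋ : ℝ) + a ≤ ⌊x j⌋ := by exact_mod_cast this
    linarith

lemma innerProd_floor_mem_Icc {v : Fin n → ℝ} (hv : v ∈ typeA n) {x : Fin n → ℝ} {a b : ℤ}
    (h : innerProd x v ∈ Set.Icc (a : ℝ) b) :
    innerProd (fun j => (⌊x j⌋ : ℝ)) v ∈ Set.Icc (a : ℝ) b := by
  have hneg : ∀ y : Fin n → ℝ, innerProd y (-v) = -innerProd y v := fun y => dotProduct_neg y v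
  refine ⟨le_innerProd_floor hv h.1, ?_⟩
  have := le_innerProd_floor (a := -b) (neg_mem_typeA hv) (by rw [hneg]; push_cast; linarith [h.2])
  rw [hneg] at this
  push_cast at this
  linarith

end Lattice

lemma exists_isLeast_innerProd_convexHull {n : ℕ} {V : Set (Fin n → ℝ)} (hV : V.Finite)
    (hne : V.Nonempty) (v : Fin n → ℝ) :
    ∃ p ∈ V, IsLeast ((innerProd · v) '' convexHull ℝ V) (innerProd p v) := by
  obtain ⟨p, hp, hmin⟩ := Set.exists_min_image V (innerProd · v) hV hne
  refine ⟨p, hp, Set.mem_image_of_mem _ (subset_convexHull ℝ V hp), ?_⟩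
  rintro _ ⟨q, hq, rfl⟩
  exact convexHull_min hmin (convex_halfSpace_ge (isLinearMap_innerProd v) _) hq

lemma sum_comp_eq_sum_card_smul {J ι M : Type*} [Fintype J] [Fintype ι] [DecidableEq ι]
    [AddCommMonoid M] [Module ℝ M] (σ : J → ι) (a : ι → M) :
    ∑ j, a (σ j) = ∑ i, (#{j | σ j = i} : ℝ) • a i := by
  rw [← Finset.sum_fiberwise Finset.univ σ]
  refine Finset.sum_congr rfl fun i _ => ?_
  rw [Finset.sum_congr rfl fun j hj => by rw [(Finset.mem_filter.1 hj).2], Finset.sum_const,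
    Nat.cast_smul_eq_nsmul]

def MinkowskiSumsCutOut {n r : ℕ} (P : Fin r → Set (Fin n → ℝ)) (S : Set (Fin n → ℝ))
    (h : Fin r → (Fin n → ℝ) → ℝ) : Prop :=
  ∀ {m : ℕ} (σ : Fin m → Fin r) (y : Fin n → ℝ), (∀ v ∈ S, ∑ j, h (σ j) v ≤ innerProd y v) →
    ∃ g : Fin r → (Fin n → ℝ), (∀ i, g i ∈ P i) ∧ y = ∑ j, g (σ j)

section MinkowskiSum

variable {n r : ℕ} {P : Fin r → Set (Fin n → ℝ)} {S : Set (Fin n → ℝ)}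
  {c : (Fin n → ℝ) → ℝ} {h : Fin r → (Fin n → ℝ) → ℝ}

lemma exists_eq_sum_smul_of_le_smul_sum
    (hcut : {x | ∃ g : Fin r → (Fin n → ℝ), (∀ i, g i ∈ P i) ∧ x = ∑ i, g i}
      = {x | ∀ v ∈ S, c v ≤ innerProd x v})
    (hh : ∀ i, ∀ v ∈ S, IsLeast ((innerProd · v) '' P i) (h i v))
    {t : ℝ} (ht : 0 < t) {x : Fin n → ℝ} (hx : ∀ v ∈ S, t * ∑ i, h i v ≤ innerProd x v) :
    ∃ g : Fin r → (Fin n → ℝ), (∀ i, g i ∈ P i) ∧ x = ∑ i, t • g i := by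
  have hc : ∀ v ∈ S, c v ≤ ∑ i, h i v := by
    intro v hv
    choose p hp hpv using fun i => (hh i v hv).1
    have : ∑ i, p i ∈ {x | ∀ v ∈ S, c v ≤ innerProd x v} := hcut ▸ ⟨p, hp, rfl⟩
    simpa only [innerProd_sum, hpv] using this v hv
  have : t⁻¹ • x ∈ {x | ∀ v ∈ S, c v ≤ innerProd x v} := fun v hv => by
    rw [innerProd_smul, le_inv_mul_iff₀ ht]
    exact (mul_le_mul_of_nonneg_left (hc v hv) ht.le).trans (hx v hv)
  rw [← hcut] at this
  obtain ⟨g, hg, hgx⟩ := this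
  exact ⟨g, hg, by rw [← Finset.smul_sum, ← hgx, smul_inv_smul₀ ht.ne']⟩

/-- If `y ∉ ∑ zᵢ Pᵢ`, separate `y` from it by a functional `f`; padding `y` by
`q = ∑ (M - zᵢ) pᵢ`, with `pᵢ` maximizing `f` on `Pᵢ`, gives a point of `M (∑ Pᵢ)` on which `f`
exceeds its maximum there. -/
theorem exists_eq_sum_smul_of_le
    (hcut : {x | ∃ g : Fin r → (Fin n → ℝ), (∀ i, g i ∈ P i) ∧ x = ∑ i, g i}
      = {x | ∀ v ∈ S, c v ≤ innerProd x v})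
    (hh : ∀ i, ∀ v ∈ S, IsLeast ((innerProd · v) '' P i) (h i v))
    (hP : ∀ i, IsCompact (P i)) (hPconv : ∀ i, Convex ℝ (P i)) (hPne : ∀ i, (P i).Nonempty)
    {z : Fin r → ℝ} (hz : 0 ≤ z) {y : Fin n → ℝ} (hy : ∀ v ∈ S, ∑ i, z i * h i v ≤ innerProd y v) :
    ∃ g : Fin r → (Fin n → ℝ), (∀ i, g i ∈ P i) ∧ y = ∑ i, z i • g i := by
  by_contra hy_not
  set K := (fun g : Fin r → (Fin n → ℝ) => ∑ i, z i • g i) '' Set.univ.pi P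
  have hKconv : Convex ℝ K := (convex_pi fun i _ => hPconv i).is_linear_image
    ⟨fun g g' => by simp [smul_add, Finset.sum_add_distrib],
      fun t g => by simp [Finset.smul_sum, smul_comm t]⟩
  have hKcpt : IsCompact K := (isCompact_univ_pi hP).image (by fun_prop)
  have hyK : y ∉ K := by
    rintro ⟨g, hg, rfl⟩
    exact hy_not ⟨g, fun i => hg i trivial, rfl⟩
  obtain ⟨f, u, hfK, hfy⟩ := geometric_hahn_banach_closed_point hKconv hKcpt.isClosed hyK
  choose p hpP hpmax using fun i => (hP i).exists_isMaxOn (hPne i) f.continuous.continuousOn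
  set M := ∑ i, z i + 1
  have hM : 0 < M := by
    have := Finset.sum_nonneg fun i (_ : i ∈ Finset.univ) => hz i
    linarith
  have hzM : ∀ i, z i ≤ M := fun i => by
    have := Finset.single_le_sum (fun j _ => hz j) (Finset.mem_univ i)
    linarith
  obtain ⟨g, hg, hyq⟩ : ∃ g : Fin r → (Fin n → ℝ), (∀ i, g i ∈ P i) ∧
      y + ∑ i, (M - z i) • p i = ∑ i, M • g i := by
    refine exists_eq_sum_smul_of_le_smul_sum hcut hh hM fun v hv => ?_
    have hpv : ∀ i, h i v ≤ innerProd (p i) v := fun i => (hh i v hv).2 ⟨p i, hpP i, rfl⟩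
    calc M * ∑ i, h i v = ∑ i, z i * h i v + ∑ i, (M - z i) * h i v := by
          rw [Finset.mul_sum, ← Finset.sum_add_distrib]; simp only [← add_mul, add_sub_cancel]
      _ ≤ innerProd y v + ∑ i, (M - z i) * innerProd (p i) v :=
          add_le_add (hy v hv) (Finset.sum_le_sum fun i _ =>
            mul_le_mul_of_nonneg_left (hpv i) (sub_nonneg.2 (hzM i)))
      _ = _ := by simp only [innerProd_add, innerProd_sum, innerProd_smul]
  have hfyq : f y + ∑ i, (M - z i) * f (p i) ≤ ∑ i, M * f (p i) := by
    have := congrArg f hyq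
    simp only [map_add, map_sum, map_smul, smul_eq_mul] at this
    rw [this]
    exact Finset.sum_le_sum fun i _ => mul_le_mul_of_nonneg_left (hpmax i (hg i)) hM.le
  have hfp : ∑ i, z i * f (p i) < f y := by
    have := hfK _ ⟨p, fun i _ => hpP i, rfl⟩
    simp only [map_sum, map_smul, smul_eq_mul] at this
    linarith
  have hsplit : ∑ i, M * f (p i) = ∑ i, z i * f (p i) + ∑ i, (M - z i) * f (p i) := by
    rw [← Finset.sum_add_distrib]; simp only [← add_mul, add_sub_cancel]
  linarith

theorem minkowskiSumsCutOut_of_sum_eq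
    (hcut : {x | ∃ g : Fin r → (Fin n → ℝ), (∀ i, g i ∈ P i) ∧ x = ∑ i, g i}
      = {x | ∀ v ∈ S, c v ≤ innerProd x v})
    (hh : ∀ i, ∀ v ∈ S, IsLeast ((innerProd · v) '' P i) (h i v))
    (hP : ∀ i, IsCompact (P i)) (hPconv : ∀ i, Convex ℝ (P i)) (hPne : ∀ i, (P i).Nonempty) :
    MinkowskiSumsCutOut P S h := by
  classical
  intro m σ y hy
  obtain ⟨g, hg, rfl⟩ := exists_eq_sum_smul_of_le hcut hh hP hPconv hPne (y := y)
    (z := fun i => (#{j | σ j = i} : ℝ)) (fun i => Nat.cast_nonneg _) fun v hv =>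
      (sum_comp_eq_sum_card_smul σ fun i => h i v).symm.trans_le (hy v hv)
  exact ⟨g, hg, (sum_comp_eq_sum_card_smul σ g).symm⟩

end MinkowskiSum

section Decomposition

variable {n r : ℕ} {P : Fin r → Set (Fin n → ℝ)} {S : Set (Fin n → ℝ)}
  {h : Fin r → (Fin n → ℝ) → ℝ}

theorem MinkowskiSumsCutOut.mem_of_forall_le (hcut : MinkowskiSumsCutOut P S h) {i : Fin r}
    {p : Fin n → ℝ} (hp : ∀ v ∈ S, h i v ≤ innerProd p v) : p ∈ P i := by
  obtain ⟨g, hg, rfl⟩ := hcut (fun _ : Fin 1 => i) p (by simpa using hp)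
  simpa using hg i

theorem MinkowskiSumsCutOut.exists_lattice_summand (hcut : MinkowskiSumsCutOut P S h)
    (hlow : ∀ i, ∀ p ∈ P i, ∀ v ∈ S, h i v ≤ innerProd p v)
    (hint : ∀ i, ∀ v ∈ S, ∃ a : ℤ, h i v = a) (hS : S ⊆ typeA n)
    {m : ℕ} (σ : Fin m → Fin r) (i₀ : Fin r) {y : Fin n → ℝ} (hyZ : y ∈ intLattice n)
    (hy : ∀ v ∈ S, h i₀ v + ∑ j, h (σ j) v ≤ innerProd y v) :
    ∃ p ∈ P i₀ ∩ intLattice n, ∀ v ∈ S, ∑ j, h (σ j) v ≤ innerProd (y - p) v := by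
  obtain ⟨g, hg, hgy⟩ := hcut (Fin.cons i₀ σ) y
    (by simpa only [Fin.sum_univ_succ, Fin.cons_zero, Fin.cons_succ] using hy)
  simp only [Fin.sum_univ_succ, Fin.cons_zero, Fin.cons_succ] at hgy
  set p : Fin n → ℝ := fun k => (⌊g i₀ k⌋ : ℝ)
  have hp : ∀ v ∈ S, h i₀ v ≤ innerProd p v ∧ innerProd p v ≤ innerProd y v - ∑ j, h (σ j) v := by
    intro v hv
    obtain ⟨a, ha⟩ := hint i₀ v hv
    choose A hA using fun i => hint i v hv
    obtain ⟨b, hb⟩ := innerProd_mem_intLattice hyZ (typeA_subset_intLattice (hS hv))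
    have hbound : innerProd y v - ∑ j, h (σ j) v = ((b - ∑ j, A (σ j) : ℤ) : ℝ) := by
      push_cast
      simp only [hb, hA]
    have hgv : innerProd (g i₀) v ≤ innerProd y v - ∑ j, h (σ j) v := by
      rw [hgy, innerProd_add, innerProd_sum]
      linarith [Finset.sum_le_sum fun j (_ : j ∈ Finset.univ) => hlow _ _ (hg (σ j)) v hv]
    have hgv' := hlow i₀ _ (hg i₀) v hv
    rw [ha] at hgv' ⊢
    rw [hbound] at hgv ⊢
    exact innerProd_floor_mem_Icc (hS hv) ⟨hgv', hgv⟩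
  refine ⟨p, ⟨hcut.mem_of_forall_le fun v hv => (hp v hv).1, fun k => ⟨_, rfl⟩⟩, fun v hv => ?_⟩
  rw [innerProd_sub]
  linarith [(hp v hv).2]

theorem MinkowskiSumsCutOut.exists_lattice_decomposition (hcut : MinkowskiSumsCutOut P S h)
    (hlow : ∀ i, ∀ p ∈ P i, ∀ v ∈ S, h i v ≤ innerProd p v)
    (hint : ∀ i, ∀ v ∈ S, ∃ a : ℤ, h i v = a) (hS : S ⊆ typeA n) :
    ∀ {m : ℕ} (σ : Fin m → Fin r) {y : Fin n → ℝ}, y ∈ intLattice n →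
      (∀ v ∈ S, ∑ j, h (σ j) v ≤ innerProd y v) →
      ∃ p : Fin m → (Fin n → ℝ), (∀ j, p j ∈ P (σ j) ∩ intLattice n) ∧ y = ∑ j, p j
  | 0, σ, y, _, hy => by
    obtain ⟨g, -, rfl⟩ := hcut σ y hy
    exact ⟨finZeroElim, finZeroElim, by simp⟩
  | m + 1, σ, y, hyZ, hy => by
    obtain ⟨p₀, hp₀, hy'⟩ := hcut.exists_lattice_summand hlow hint hS (fun j => σ j.succ) (σ 0) hyZ
      (by simpa only [Fin.sum_univ_succ] using hy)
    obtain ⟨p, hp, hsum⟩ := hcut.exists_lattice_decomposition hlow hint hS (fun j => σ j.succ)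
      (sub_mem_intLattice hyZ hp₀.2) hy'
    refine ⟨Fin.cons p₀ p, Fin.cases hp₀ hp, ?_⟩
    rw [Fin.sum_cons, ← hsum, add_sub_cancel]

end Decomposition

lemma exists_natCast_eq_of_mem_intLattice {r : ℕ} {u : Fin r → ℝ} (hu : u ∈ intLattice r)
    (h0 : 0 ≤ u) : ∃ z : Fin r → ℕ, u = fun i => (z i : ℝ) := by
  choose a ha using hu
  refine ⟨fun i => (a i).toNat, funext fun i => ?_⟩
  have h0i := h0 i
  rw [ha i] at h0i ⊢
  exact_mod_cast (Int.toNat_of_nonneg (Int.cast_nonneg_iff.1 h0i)).symm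

def replicateIndex {r : ℕ} (z : Fin r → ℕ) (j : Fin (∑ i, z i)) : Fin r :=
  (finSigmaFinEquiv.symm j).1

lemma sum_replicateIndex {r : ℕ} {M : Type*} [AddCommMonoid M] (z : Fin r → ℕ) (a : Fin r → M) :
    ∑ j, a (replicateIndex z j) = ∑ i, z i • a i := by
  refine (finSigmaFinEquiv.symm.sum_comp fun p => a p.1).trans ?_
  rw [Fintype.sum_sigma]
  simp

def cayleySum {n r : ℕ} (P : Fin r → Set (Fin n → ℝ)) : Set ((Fin n → ℝ) × (Fin r → ℝ)) :=
  convexHull ℝ (⋃ i, (fun p => (p, stdBasis r i)) '' P i)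

section Cayley

variable {n r : ℕ} {P : Fin r → Set (Fin n → ℝ)}

lemma mk_mem_cayleySum {i : Fin r} {p : Fin n → ℝ} (hp : p ∈ P i) :
    (p, stdBasis r i) ∈ cayleySum P :=
  subset_convexHull ℝ _ (Set.mem_iUnion.2 ⟨i, p, hp, rfl⟩)

lemma cayleySum_subset {T : Set ((Fin n → ℝ) × (Fin r → ℝ))} (hT : Convex ℝ T)
    (hP : ∀ i, ∀ p ∈ P i, (p, stdBasis r i) ∈ T) : cayleySum P ⊆ T :=
  convexHull_min (Set.iUnion_subset fun i => Set.image_subset_iff.2 fun p hp => hP i p hp) hT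

lemma snd_mem_stdSimplex_of_mem_cayleySum {w : (Fin n → ℝ) × (Fin r → ℝ)}
    (hw : w ∈ cayleySum P) : w.2 ∈ stdSimplex ℝ (Fin r) :=
  cayleySum_subset ((convex_stdSimplex ℝ (Fin r)).is_linear_preimage (LinearMap.snd ℝ _ _).isLinear)
    (fun i _ _ => by simpa [stdBasis_eq_single] using single_mem_stdSimplex ℝ i) hw

lemma sum_mul_le_innerProd_of_mem_cayleySum {b : Fin r → ℝ} {v : Fin n → ℝ}
    (hb : ∀ i, ∀ p ∈ P i, b i ≤ innerProd p v) {w : (Fin n → ℝ) × (Fin r → ℝ)}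
    (hw : w ∈ cayleySum P) : ∑ i, w.2 i * b i ≤ innerProd w.1 v := by
  have hlin : IsLinearMap ℝ fun u : (Fin n → ℝ) × (Fin r → ℝ) => u.2 ⬝ᵥ b - innerProd u.1 v :=
    ⟨fun u u' => by simp only [Prod.snd_add, Prod.fst_add, add_dotProduct, innerProd_add]; ring,
      fun t u => by
        simp only [Prod.smul_snd, Prod.smul_fst, smul_dotProduct, innerProd_smul, smul_eq_mul]
        ring⟩
  refine sub_nonpos.1 (cayleySum_subset (convex_halfSpace_le hlin 0) (fun i p hp => ?_) hw)
  show stdBasis r i ⬝ᵥ b - innerProd p v ≤ 0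
  rw [stdBasis_eq_single, single_dotProduct, one_mul]
  linarith [hb i p hp]

theorem exists_natCast_eq_of_mem_smul_cayleySum {S : Set (Fin n → ℝ)}
    {b : Fin r → (Fin n → ℝ) → ℝ} (hb : ∀ i, ∀ p ∈ P i, ∀ v ∈ S, b i v ≤ innerProd p v)
    {m : ℕ} {x : (Fin n → ℝ) × (Fin r → ℝ)} (hxZ : x.2 ∈ intLattice r)
    (hx : x ∈ (m : ℝ) • cayleySum P) :
    ∃ z : Fin r → ℕ, ∑ i, z i = m ∧ x.2 = (fun i => (z i : ℝ)) ∧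
      ∀ v ∈ S, ∑ i, (z i : ℝ) * b i v ≤ innerProd x.1 v := by
  obtain ⟨w, hw, rfl⟩ := Set.mem_smul_set.1 hx
  obtain ⟨hw0, hw1⟩ := snd_mem_stdSimplex_of_mem_cayleySum hw
  obtain ⟨z, hz⟩ := exists_natCast_eq_of_mem_intLattice hxZ
    fun i => mul_nonneg m.cast_nonneg (hw0 i)
  have hz' : ∀ i, (z i : ℝ) = m * w.2 i := fun i => (congrFun hz i).symm
  refine ⟨z, ?_, hz, fun v hv => ?_⟩
  · have : (∑ i, z i : ℝ) = m := by simp only [hz', ← Finset.mul_sum, hw1, mul_one]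
    exact_mod_cast this
  · simp only [hz', mul_assoc, ← Finset.mul_sum, Prod.smul_fst, innerProd_smul]
    exact mul_le_mul_of_nonneg_left
      (sum_mul_le_innerProd_of_mem_cayleySum (fun i p hp => hb i p hp v hv) hw) m.cast_nonneg

end Cayley

theorem typeA_cayley_normal_general (n r : ℕ)
    (P : Fin r → Set (Fin n → ℝ))
    (hpoly : ∀ i, ∃ V : Set (Fin n → ℝ), V.Finite ∧ V.Nonempty ∧ V ⊆ intLattice n ∧
      P i = convexHull ℝ V)
    (hcut : ∃ S : Finset (Fin n → ℝ), ↑S ⊆ typeA n ∧ ∃ c : (Fin n → ℝ) → ℝ,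
      {x | ∃ g : Fin r → (Fin n → ℝ), (∀ i, g i ∈ P i) ∧ x = ∑ i, g i}
        = {x | ∀ v ∈ S, c v ≤ innerProd x v})
    (C : Set ((Fin n → ℝ) × (Fin r → ℝ)))
    (hC : C = convexHull ℝ (⋃ i, (fun p => (p, stdBasis r i)) '' P i))
    (m : ℕ) (x : (Fin n → ℝ) × (Fin r → ℝ))
    (hx : x.1 ∈ intLattice n ∧ x.2 ∈ intLattice r) (hxm : x ∈ (m : ℝ) • C) :
    ∃ f : Fin m → (Fin n → ℝ) × (Fin r → ℝ),
      (∀ j, ((f j).1 ∈ intLattice n ∧ (f j).2 ∈ intLattice r) ∧ f j ∈ C) ∧ x = ∑ j, f j := by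
  obtain ⟨S, hS, c, hQ⟩ := hcut
  choose V hVfin hVne hVZ hPV using hpoly
  choose pmin hpmin hleast using fun i v => exists_isLeast_innerProd_convexHull (hVfin i) (hVne i) v
  set h := fun i v => innerProd (pmin i v) v
  have hh : ∀ i, ∀ v ∈ (S : Set (Fin n → ℝ)), IsLeast ((innerProd · v) '' P i) (h i v) :=
    fun i v _ => hPV i ▸ hleast i v
  have hlow : ∀ i, ∀ p ∈ P i, ∀ v ∈ (S : Set (Fin n → ℝ)), h i v ≤ innerProd p v :=
    fun i p hp v hv => (hh i v hv).2 ⟨p, hp, rfl⟩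
  have hsums : MinkowskiSumsCutOut P S h := minkowskiSumsCutOut_of_sum_eq hQ hh
    (fun i => hPV i ▸ (hVfin i).isCompact_convexHull ℝ) (fun i => hPV i ▸ convex_convexHull ℝ (V i))
    (fun i => hPV i ▸ (hVne i).convexHull)
  subst hC
  obtain ⟨z, rfl, hxz, hxv⟩ := exists_natCast_eq_of_mem_smul_cayleySum hlow hx.2 hxm
  obtain ⟨p, hp, hxp⟩ := hsums.exists_lattice_decomposition hlow
    (fun i v hv => innerProd_mem_intLattice (hVZ i (hpmin i v)) (typeA_subset_intLattice (hS hv)))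
    hS (replicateIndex z) hx.1 fun v hv => (sum_replicateIndex z fun i => h i v).trans_le
      (by simpa only [nsmul_eq_mul] using hxv v hv)
  refine ⟨fun j => (p j, stdBasis r (replicateIndex z j)),
    fun j => ⟨⟨(hp j).2, stdBasis_mem_intLattice _⟩, mk_mem_cayleySum (hp j).1⟩, Prod.ext ?_ ?_⟩
  · simpa [Prod.fst_sum] using hxp
  · rw [Prod.snd_sum, sum_replicateIndex, hxz]
    ext i
    simp [stdBasis]

/-- If `P 0, …, P (r-1)` are lattice polytopes (with respect to the lattice `M = ℤ^n`)
in `ℝ^n` whose Minkowski sum is cut out by the root system `A_n`, then the Cayley sum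
`P 0 * ⋯ * P (r-1)`, the convex hull of `⋃ i, P i × {e i}` in `ℝ^n × ℝ^r`, is a normal
lattice polytope with respect to `M × ℤ^r`: every lattice point of `m·(P 0 * ⋯ * P (r-1))`
is a sum of `m` lattice points of the Cayley sum. -/
theorem typeA_cayley_normal (n r : ℕ) (hn : 1 ≤ n) (hr : 1 ≤ r)
    (P : Fin r → Set (Fin n → ℝ))
    (hpoly : ∀ i, ∃ V : Set (Fin n → ℝ), V.Finite ∧ V.Nonempty ∧ V ⊆ intLattice n ∧
      P i = convexHull ℝ V)
    (hcut : ∃ S : Finset (Fin n → ℝ), ↑S ⊆ typeA n ∧ ∃ c : (Fin n → ℝ) → ℝ,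
      {x | ∃ g : Fin r → (Fin n → ℝ), (∀ i, g i ∈ P i) ∧ x = ∑ i, g i}
        = {x | ∀ v ∈ S, c v ≤ innerProd x v})
    (C : Set ((Fin n → ℝ) × (Fin r → ℝ)))
    (hC : C = convexHull ℝ (⋃ i, (fun p => (p, stdBasis r i)) '' P i))
    (m : ℕ) (hm : 0 < m) (x : (Fin n → ℝ) × (Fin r → ℝ))
    (hx : x.1 ∈ intLattice n ∧ x.2 ∈ intLattice r) (hxm : x ∈ (m : ℝ) • C) :
    ∃ f : Fin m → (Fin n → ℝ) × (Fin r → ℝ),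
      (∀ j, ((f j).1 ∈ intLattice n ∧ (f j).2 ∈ intLattice r) ∧ f j ∈ C) ∧ x = ∑ j, f j :=
  typeA_cayley_normal_general n r P hpoly hcut C hC m x hx hxm
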